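/- Let $K \ge 1$, $R_c \ge 0$, and $R_{p,1} \le \cdots \le R_{p,K}$ be reals. Define, for $1 \le k' \le K$, $\eta(k') = (R_c + \sum_{j=1}^{k'} R_{p,j})/k'$. Let $k^\star$ be the largest $k' \le K$ such that $\eta(k') \ge R_{p,j}$ for all $j \le k'$ (equivalently $\eta(k') \ge R_{p,k'}$). Then the allocation $C_j = \eta(k^\star) - R_{p,j}$ for $j \le k^\star$ and $C_j = 0$ for $j > k^\star$ is feasible (nonnegative, sums to $R_c$) and achieves the maximum of $\min_k (C_k + R_{p,k})$ over all feasible allocations, with optimal value $\min(\eta(k^\star), R_{p,k^\star+1})$ interpreted as $\eta(k^\star)$ when $k^\star = K$. -/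

import Mathlib

/-!
For a feasible allocation `C'` and every `1 ≤ m ≤ K`, the minimum of `C' k + Rp k` is at most the
average of its first `m` values, which is at most `η m` because `∑_{k<m} C' k ≤ Rc`. The closed-form
allocation levels the users `k < kstar` at `η kstar` and leaves each other user at
`Rp k ≥ Rp kstar`, so its value is `min (η kstar) (Rp kstar)`. The bound at `m = kstar` gives
`≤ η kstar`, and the bound at `m = kstar + 1` gives `≤ Rp kstar`: maximality of `kstar` yields some
`j ≤ kstar` with `η (kstar + 1) < Rp j ≤ Rp kstar`.
-/

open Finset

lemma inf'_add_le_sum_add_sum_div_card {ι : Type*} [Fintype ι] (hne : (univ : Finset ι).Nonempty)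
    {C f : ι → ℝ} (hC : ∀ k, 0 ≤ C k) {T : Finset ι} (hT : T.Nonempty) :
    univ.inf' hne (fun k => C k + f k) ≤ (∑ k, C k + ∑ k ∈ T, f k) / #T := by
  rw [le_div_iff₀ (by exact_mod_cast hT.card_pos), mul_comm, ← nsmul_eq_mul]
  calc #T • univ.inf' hne (fun k => C k + f k)
      ≤ ∑ k ∈ T, (C k + f k) := card_nsmul_le_sum _ _ _ fun k _ => inf'_le _ (mem_univ k)
    _ = ∑ k ∈ T, C k + ∑ k ∈ T, f k := sum_add_distrib
    _ ≤ ∑ k, C k + ∑ k ∈ T, f k := by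
        gcongr
        · exact fun k _ _ => hC k
        · exact subset_univ T

lemma Fin.card_filter_val_lt_of_le {K m : ℕ} (hm : m ≤ K) : #{j : Fin K | (j : ℕ) < m} = m := by
  rw [Fin.card_filter_val_lt, min_eq_right hm]

lemma inf'_add_le_sum_add_sum_filter_val_lt_div {K m : ℕ} (hm : 1 ≤ m) (hmK : m ≤ K)
    (hne : (univ : Finset (Fin K)).Nonempty) {C f : Fin K → ℝ} (hC : ∀ k, 0 ≤ C k) :
    univ.inf' hne (fun k => C k + f k) ≤
      (∑ k, C k + ∑ j ∈ univ.filter (fun j : Fin K => (j : ℕ) < m), f j) / m := by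
  have hT : (univ.filter fun j : Fin K => (j : ℕ) < m).Nonempty :=
    ⟨⟨0, by omega⟩, mem_filter.mpr ⟨mem_univ _, hm⟩⟩
  simpa only [Fin.card_filter_val_lt_of_le hmK] using inf'_add_le_sum_add_sum_div_card hne hC hT

lemma inf'_ite_val_lt_of_monotone {α : Type*} [LinearOrder α] {K n : ℕ} (hn : 1 ≤ n)
    (hnK : n ≤ K) (hne : (univ : Finset (Fin K)).Nonempty) (a : α) {f : Fin K → α}
    (hf : Monotone f) :
    univ.inf' hne (fun k => if (k : ℕ) < n then a else f k) =
      if h : n < K then min a (f ⟨n, h⟩) else a := by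
  have hle_a : univ.inf' hne (fun k => if (k : ℕ) < n then a else f k) ≤ a :=
    (inf'_le _ (mem_univ (⟨0, by omega⟩ : Fin K))).trans_eq (if_pos (by simp; omega))
  split_ifs with h
  · refine le_antisymm (le_min hle_a ?_) (le_inf' _ _ fun k _ => ?_)
    · exact (inf'_le _ (mem_univ (⟨n, h⟩ : Fin K))).trans_eq (if_neg (lt_irrefl n))
    · split_ifs with hk
      · exact min_le_left _ _
      · exact (min_le_right _ _).trans (hf (Fin.mk_le_of_le_val (not_lt.mp hk)))
  · exact le_antisymm hle_a (le_inf' _ _ fun k _ => (if_pos (by omega)).symm.le)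

theorem stmt_3_general (K : ℕ) (hK : 1 ≤ K) (Rc : ℝ)
    (Rp : Fin K → ℝ) (hmono : Monotone Rp) (kstar : ℕ)
    (η : ℕ → ℝ)
    (hη : ∀ k' : ℕ, η k' =
      (Rc + ∑ j ∈ Finset.univ.filter (fun j : Fin K => (j : ℕ) < k'), Rp j) / k')
    (hks1 : 1 ≤ kstar) (hks2 : kstar ≤ K)
    (hfeas : ∀ j : Fin K, (j : ℕ) < kstar → Rp j ≤ η kstar)
    (hmax : ∀ k' : ℕ, kstar < k' → k' ≤ K → ∃ j : Fin K, (j : ℕ) < k' ∧ η k' < Rp j) :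
    let C : Fin K → ℝ := fun j => if (j : ℕ) < kstar then η kstar - Rp j else 0
    let opt : ℝ := if h : kstar < K then min (η kstar) (Rp ⟨kstar, h⟩) else η kstar
    (∀ j, 0 ≤ C j) ∧ (∑ j, C j = Rc) ∧
      Finset.univ.inf' (Finset.univ_nonempty_iff.mpr ⟨⟨0, hK⟩⟩)
          (fun k => C k + Rp k) = opt ∧
      (∀ C' : Fin K → ℝ, (∀ k, 0 ≤ C' k) → (∑ k, C' k = Rc) →
        Finset.univ.inf' (Finset.univ_nonempty_iff.mpr ⟨⟨0, hK⟩⟩)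
            (fun k => C' k + Rp k) ≤ opt) := by
  intro C opt
  refine ⟨fun j => ?_, ?_, ?_, fun C' hC' hsum => ?_⟩
  · by_cases hj : (j : ℕ) < kstar
    · simpa [C, hj] using hfeas j hj
    · simp [C, hj]
  · rw [← sum_filter, sum_sub_distrib, sum_const, Fin.card_filter_val_lt_of_le hks2,
      nsmul_eq_mul, hη, mul_div_cancel₀ _ (by positivity)]
    ring
  · have hCRp : (fun k => C k + Rp k) =
        fun k : Fin K => if (k : ℕ) < kstar then η kstar else Rp k := by
      ext k; by_cases hk : (k : ℕ) < kstar <;> simp [C, hk]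
    rw [hCRp]
    exact inf'_ite_val_lt_of_monotone hks1 hks2 _ _ hmono
  · have hmin_le_η : ∀ m, 1 ≤ m → m ≤ K →
        univ.inf' (univ_nonempty_iff.mpr ⟨⟨0, hK⟩⟩) (fun k => C' k + Rp k) ≤ η m := by
      intro m hm hmK
      rw [hη, ← hsum]
      exact inf'_add_le_sum_add_sum_filter_val_lt_div hm hmK _ hC'
    simp only [opt]
    split_ifs with h
    · obtain ⟨j, hj, hηj⟩ := hmax (kstar + 1) (by omega) h
      refine le_min (hmin_le_η kstar hks1 hks2) ?_
      calc _ ≤ η (kstar + 1) := hmin_le_η _ (by omega) h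
        _ ≤ Rp j := hηj.le
        _ ≤ Rp ⟨kstar, h⟩ := hmono (Fin.le_def.mpr (Nat.lt_succ_iff.mp hj))
    · exact hmin_le_η kstar hks1 hks2

open Finset in
/-- Closed-form optimal common-rate allocation for the MMF problem (Algorithm 3 /
Proposition 2): with sorted private rates and the water level
`η(k') = (Rc + ∑_{j≤k'} R_{p,j})/k'`, taking `k⋆` the largest feasible level index,
the allocation `C_j = η(k⋆) - R_{p,j}` for `j ≤ k⋆`, `C_j = 0` otherwise, is feasible
and maximizes `min_k (C_k + R_{p,k})`, with optimal value
`min(η(k⋆), R_{p,k⋆+1})` (interpreted as `η(k⋆)` when `k⋆ = K`). -/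
theorem stmt_3 (K : ℕ) (hK : 1 ≤ K) (Rc : ℝ) (hRc : 0 ≤ Rc)
    (Rp : Fin K → ℝ) (hmono : Monotone Rp) (kstar : ℕ)
    (η : ℕ → ℝ)
    (hη : ∀ k' : ℕ, η k' =
      (Rc + ∑ j ∈ Finset.univ.filter (fun j : Fin K => (j : ℕ) < k'), Rp j) / k')
    (hks1 : 1 ≤ kstar) (hks2 : kstar ≤ K)
    (hfeas : ∀ j : Fin K, (j : ℕ) < kstar → Rp j ≤ η kstar)
    (hmax : ∀ k' : ℕ, kstar < k' → k' ≤ K → ∃ j : Fin K, (j : ℕ) < k' ∧ η k' < Rp j) :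
    let C : Fin K → ℝ := fun j => if (j : ℕ) < kstar then η kstar - Rp j else 0
    let opt : ℝ := if h : kstar < K then min (η kstar) (Rp ⟨kstar, h⟩) else η kstar
    (∀ j, 0 ≤ C j) ∧ (∑ j, C j = Rc) ∧
      Finset.univ.inf' (Finset.univ_nonempty_iff.mpr ⟨⟨0, hK⟩⟩)
          (fun k => C k + Rp k) = opt ∧
      (∀ C' : Fin K → ℝ, (∀ k, 0 ≤ C' k) → (∑ k, C' k = Rc) →
        Finset.univ.inf' (Finset.univ_nonempty_iff.mpr ⟨⟨0, hK⟩⟩)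
            (fun k => C' k + Rp k) ≤ opt) :=
  stmt_3_general K hK Rc Rp hmono kstar η hη hks1 hks2 hfeas hmax
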